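/- Let p ∈ (1,∞), let M_n = [2^{n-1}, 2^n) ∩ ℕ for n ≥ 1, and let x_1, ..., x_N be finitely supported real sequences with the support of x_n contained in M_n for each n. Define Δ : c₀₀ → c₀₀ by Δ(y) = Σ_{n=1}^N y_{2^n−1} · x_n, where y_j denotes the j-th coordinate of y. Then: (i) for every finitely supported real sequence y, ‖Δ(y)‖_{B_p} ≤ 3^{1/p} · max_{1≤n≤N} ‖x_n‖_{B_p} · ‖y‖_{B_p}; and (ii) for each k ∈ {1,...,N}, the standard basis vector b_{2^k−1} satisfies ‖b_{2^k−1}‖_{B_p} = 1 and Δ(b_{2^k−1}) = x_k, so that sup{‖Δ(y)‖_{B_p} : ‖y‖_{B_p} ≤ 1} ≥ max_{1≤n≤N} ‖x_n‖_{B_p}. -/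
import Mathlib


/-- A non-empty finite subset `M` of `ℕ = {1,2,...}` is admissible if `|M| ≤ min M`,
i.e. `M` is non-empty and its cardinality is at most every element of `M`. -/
def Admissible (M : Finset ℕ) : Prop := M.Nonempty ∧ ∀ k ∈ M, M.card ≤ k

/-- `μ(x, N) = ∑_{n ∈ N} |x_n|`. -/
def mu (x : ℕ → ℝ) (N : Finset ℕ) : ℝ := ∑ n ∈ N, |x n|

/-- `N₁ < N₂ < ⋯ < N_k`: every element of `N i` is smaller than every element of `N j`
whenever `i < j`. -/
def SepChain {k : ℕ} (N : Fin k → Finset ℕ) : Prop :=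
  ∀ i j : Fin k, i < j → ∀ a ∈ N i, ∀ b ∈ N j, a < b

/-- The Baernstein norm
`‖x‖_{B_p} = sup { ν_p(x; N₁,…,N_k) : k ≥ 1, N₁ < ⋯ < N_k admissible }`, where
`ν_p(x; N₁,…,N_k) = (∑_j μ(x,N_j)^p)^{1/p}`. -/
noncomputable def BpNorm (p : ℝ) (x : ℕ → ℝ) : ℝ :=
  sSup { t : ℝ | ∃ (k : ℕ) (N : Fin k → Finset ℕ), 0 < k ∧ (∀ j, Admissible (N j)) ∧
    SepChain N ∧ t = (∑ j, (mu x (N j)) ^ p) ^ (1 / p) }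

/-- The block `M_n = [2^{n-1}, 2^n) ∩ ℕ`. -/
def Mblock (n : ℕ) : Finset ℕ := Finset.Ico (2 ^ (n - 1)) (2 ^ n)

/-- `uep(N) = { 2^k − 1 : k ≥ 1, N ∩ M_k ≠ ∅ }`, the set of upper end points of the
blocks `M_k` that `N` intersects. -/
def uep (N : Finset ℕ) : Finset ℕ :=
  ((Finset.range (N.sup id + 2)).filter fun k => 1 ≤ k ∧ (N ∩ Mblock k).Nonempty).image
    fun k => 2 ^ k - 1

/-- The diagonal operator `Δ(y) = ∑_{n=1}^K y_{2^n−1} · x_n`. -/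
def DeltaOp (K : ℕ) (x : ℕ → ℕ → ℝ) (y : ℕ → ℝ) : ℕ → ℝ :=
  fun j => ∑ n ∈ Finset.Icc 1 K, y (2 ^ n - 1) * x n j



-- basics
lemma mu_nonneg (x : ℕ → ℝ) (N : Finset ℕ) : 0 ≤ mu x N :=
  Finset.sum_nonneg fun _ _ => abs_nonneg _

lemma mu_mono (x : ℕ → ℝ) {N N' : Finset ℕ} (h : N ⊆ N') : mu x N ≤ mu x N' :=
  Finset.sum_le_sum_of_subset_of_nonneg h fun _ _ _ => abs_nonneg _

lemma bpnorm_nonneg (p : ℝ) (x : ℕ → ℝ) : 0 ≤ BpNorm p x := by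
  apply Real.sSup_nonneg
  rintro t ⟨k, N, hk, hadm, hsep, rfl⟩
  exact Real.rpow_nonneg (Finset.sum_nonneg fun j _ => Real.rpow_nonneg (mu_nonneg _ _) _) _

lemma rpow_rpow_inv {a p : ℝ} (ha : 0 ≤ a) (hp : p ≠ 0) : (a ^ p) ^ (1 / p) = a := by
  rw [← Real.rpow_mul ha, mul_one_div_cancel hp, Real.rpow_one]

lemma rpow_inv_rpow {a p : ℝ} (ha : 0 ≤ a) (hp : p ≠ 0) : (a ^ (1 / p)) ^ p = a := by
  rw [← Real.rpow_mul ha, one_div_mul_cancel hp, Real.rpow_one]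

lemma sepChain_pairwiseDisjoint {k : ℕ} {N : Fin k → Finset ℕ} (h : SepChain N)
    {i j : Fin k} (hij : i ≠ j) {a : ℕ} (hai : a ∈ N i) (haj : a ∈ N j) : False := by
  rcases hij.lt_or_gt with hlt | hlt
  · exact lt_irrefl a (h i j hlt a hai a haj)
  · exact lt_irrefl a (h j i hlt a haj a hai)

lemma bddAbove_bpset {p : ℝ} (hp : 1 < p) (x : ℕ → ℝ) (hx : (Function.support x).Finite) :
    BddAbove { t : ℝ | ∃ (k : ℕ) (N : Fin k → Finset ℕ), 0 < k ∧ (∀ j, Admissible (N j)) ∧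
    SepChain N ∧ t = (∑ j, (mu x (N j)) ^ p) ^ (1 / p) } := by
  classical
  set F := hx.toFinset with hF
  set S := ∑ i ∈ F, |x i| with hS
  have hS0 : 0 ≤ S := Finset.sum_nonneg fun _ _ => abs_nonneg _
  refine ⟨((F.card : ℝ) * S ^ p) ^ (1 / p), ?_⟩
  rintro t ⟨k, N, hk, hadm, hsep, rfl⟩
  have hp0 : (0:ℝ) ≤ 1 / p := by positivity
  apply Real.rpow_le_rpow (Finset.sum_nonneg fun j _ => Real.rpow_nonneg (mu_nonneg _ _) _) ?_ hp0
  -- ∑ j, mu x (N j) ^ p ≤ F.card * S ^ p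
  set P := Finset.univ.filter (fun j : Fin k => (N j ∩ F).Nonempty) with hP
  have hzero : ∀ j : Fin k, j ∉ P → mu x (N j) ^ p = 0 := by
    intro j hj
    have : mu x (N j) = 0 := by
      apply Finset.sum_eq_zero
      intro i hi
      by_contra hne
      have hiF : i ∈ F := by
        rw [hF, Set.Finite.mem_toFinset, Function.mem_support]
        intro h0
        exact hne (by rw [h0, abs_zero])
      exact hj (Finset.mem_filter.mpr ⟨Finset.mem_univ _, ⟨i, Finset.mem_inter.mpr ⟨hi, hiF⟩⟩⟩)
    rw [this, Real.zero_rpow (by positivity)]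
  have hsum : ∑ j, mu x (N j) ^ p = ∑ j ∈ P, mu x (N j) ^ p := by
    rw [hP]
    refine (Finset.sum_filter_of_ne (fun j _ h => ?_)).symm
    by_contra hc
    exact h (hzero j (by simp only [hP, Finset.mem_filter, Finset.mem_univ, true_and]; exact hc))
  rw [hsum]
  have hbound : ∀ j ∈ P, mu x (N j) ^ p ≤ S ^ p := by
    intro j _
    apply Real.rpow_le_rpow (mu_nonneg _ _) ?_ (by positivity)
    have : mu x (N j) = ∑ i ∈ N j ∩ F, |x i| := by
      apply (Finset.sum_subset Finset.inter_subset_left ?_).symm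
      intro i hi hni
      have : i ∉ F := fun hiF => hni (Finset.mem_inter.mpr ⟨hi, hiF⟩)
      rw [hF, Set.Finite.mem_toFinset, Function.mem_support, not_not] at this
      simp [this]
    rw [this, hS]
    exact Finset.sum_le_sum_of_subset_of_nonneg Finset.inter_subset_right
      fun _ _ _ => abs_nonneg _
  calc ∑ j ∈ P, mu x (N j) ^ p ≤ ∑ _j ∈ P, S ^ p := Finset.sum_le_sum hbound
    _ = (P.card : ℝ) * S ^ p := by rw [Finset.sum_const, nsmul_eq_mul]
    _ ≤ (F.card : ℝ) * S ^ p := by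
        apply mul_le_mul_of_nonneg_right ?_ (Real.rpow_nonneg hS0 _)
        have : P.card ≤ F.card := by
          apply Finset.card_le_card_of_injOn
            (fun j => if h : (N j ∩ F).Nonempty then (N j ∩ F).max' h else 0)
          · intro j hj
            have h := (Finset.mem_filter.mp hj).2
            simp only [h, dif_pos]
            exact Finset.mem_inter.mp ((N j ∩ F).max'_mem h) |>.2
          · intro a ha b hb hab
            have hA := (Finset.mem_filter.mp ha).2
            have hB := (Finset.mem_filter.mp hb).2
            simp only [hA, hB, dif_pos] at hab
            by_contra hne
            exact sepChain_pairwiseDisjoint hsep hne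
              (Finset.mem_inter.mp ((N a ∩ F).max'_mem hA)).1
              (hab ▸ (Finset.mem_inter.mp ((N b ∩ F).max'_mem hB)).1)
        exact_mod_cast this

lemma nu_le_bpnorm {p : ℝ} (hp : 1 < p) (z : ℕ → ℝ) (hz : (Function.support z).Finite)
    {k : ℕ} (hk : 0 < k) (N : Fin k → Finset ℕ) (hadm : ∀ j, Admissible (N j))
    (hsep : SepChain N) : (∑ j, (mu z (N j)) ^ p) ^ (1 / p) ≤ BpNorm p z :=
  le_csSup (bddAbove_bpset hp z hz) ⟨k, N, hk, hadm, hsep, rfl⟩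

/-- Lemma C: sum of `μ^p` over a separated family of admissible sets indexed by a
finset in a linear order is at most `‖z‖^p`. -/
lemma sum_mu_rpow_le {p : ℝ} (hp : 1 < p) (z : ℕ → ℝ) (hz : (Function.support z).Finite)
    {ι : Type*} [LinearOrder ι] (A : Finset ι) (E : ι → Finset ℕ)
    (hadm : ∀ j ∈ A, Admissible (E j))
    (hsep : ∀ i ∈ A, ∀ j ∈ A, i < j → ∀ a ∈ E i, ∀ b ∈ E j, a < b) :
    ∑ j ∈ A, (mu z (E j)) ^ p ≤ (BpNorm p z) ^ p := by
  have hp0 : p ≠ 0 := by positivity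
  rcases A.eq_empty_or_nonempty with rfl | hA
  · simp [Real.rpow_nonneg (bpnorm_nonneg p z) p]
  · set r := A.card with hr
    have hrpos : 0 < r := Finset.card_pos.mpr hA
    set e := A.orderIsoOfFin rfl with he
    set N : Fin r → Finset ℕ := fun i => E (e i) with hN
    have hsum : ∑ i : Fin r, (mu z (N i)) ^ p = ∑ j ∈ A, (mu z (E j)) ^ p := by
      rw [← Finset.sum_coe_sort A (fun j => (mu z (E j)) ^ p)]
      exact Fintype.sum_equiv e.toEquiv _ _ (fun i => rfl)
    have hadm' : ∀ i, Admissible (N i) := fun i => hadm _ (e i).2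
    have hsep' : SepChain N := by
      intro i j hij a ha b hb
      exact hsep _ (e i).2 _ (e j).2 (by exact_mod_cast e.strictMono hij) a ha b hb
    have h1 := nu_le_bpnorm hp z hz hrpos N hadm' hsep'
    have hnn : (0:ℝ) ≤ ∑ i : Fin r, (mu z (N i)) ^ p :=
      Finset.sum_nonneg fun j _ => Real.rpow_nonneg (mu_nonneg _ _) _
    calc ∑ j ∈ A, (mu z (E j)) ^ p = ((∑ i : Fin r, (mu z (N i)) ^ p) ^ (1/p)) ^ p := by
          rw [rpow_inv_rpow hnn hp0, hsum]
      _ ≤ (BpNorm p z) ^ p :=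
          Real.rpow_le_rpow (Real.rpow_nonneg hnn _) h1 (by positivity)

lemma mu_le_bpnorm {p : ℝ} (hp : 1 < p) (z : ℕ → ℝ) (hz : (Function.support z).Finite)
    {N : Finset ℕ} (hN : Admissible N) : mu z N ≤ BpNorm p z := by
  have hp0 : p ≠ 0 := by positivity
  have h := nu_le_bpnorm hp z hz Nat.one_pos (fun _ : Fin 1 => N) (fun _ => hN)
    (fun i j hij => absurd (Subsingleton.elim i j) hij.ne)
  rwa [Fin.sum_univ_one, rpow_rpow_inv (mu_nonneg _ _) hp0] at h

-- Mblock facts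
lemma mblock_admissible {n : ℕ} (hn : 1 ≤ n) : Admissible (Mblock n) := by
  constructor
  · rw [Mblock, Finset.nonempty_Ico]
    exact Nat.pow_lt_pow_right one_lt_two (by omega)
  · intro k hk
    rw [Mblock, Finset.mem_Ico] at hk
    rw [Mblock, Nat.card_Ico]
    have h1 : 2 ^ (n-1) < 2 ^ n := Nat.pow_lt_pow_right one_lt_two (by omega)
    have h2 : 2 ^ n = 2 * 2 ^ (n - 1) := by
      rw [← pow_succ']
      congr 1
      omega
    omega

lemma mblock_disjoint {n n' i : ℕ} (hi : i ∈ Mblock n) (hi' : i ∈ Mblock n') : n = n' := by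
  rw [Mblock, Finset.mem_Ico] at hi hi'
  by_contra hne
  rcases Nat.lt_or_ge n n' with h | h
  · have : 2 ^ n ≤ 2 ^ (n' - 1) := Nat.pow_le_pow_right (by norm_num) (by omega)
    omega
  · have h' : n' < n := by omega
    have : 2 ^ n' ≤ 2 ^ (n - 1) := Nat.pow_le_pow_right (by norm_num) (by omega)
    omega

lemma pow2m1_lt {k k' : ℕ} (h : k < k') : 2 ^ k - 1 < 2 ^ k' - 1 := by
  have := Nat.pow_lt_pow_right (a := 2) one_lt_two h
  have := Nat.one_le_two_pow (n := k)
  omega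

lemma pow2m1_injOn {k k' : ℕ} (h : 2 ^ k - 1 = 2 ^ k' - 1) : k = k' := by
  have h1 := Nat.one_le_two_pow (n := k)
  have h2 := Nat.one_le_two_pow (n := k')
  have : 2 ^ k = 2 ^ k' := by omega
  exact Nat.pow_right_injective le_rfl this

section Delta
variable {K : ℕ} {x : ℕ → ℕ → ℝ}
  (hsupp : ∀ n, 1 ≤ n → n ≤ K → ∀ j, x n j ≠ 0 → j ∈ Mblock n)

include hsupp in
lemma deltaAbs (y : ℕ → ℝ) (i : ℕ) :
    |DeltaOp K x y i| = ∑ n ∈ Finset.Icc 1 K, |y (2 ^ n - 1)| * |x n i| := by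
  classical
  by_cases h : ∃ n0 ∈ Finset.Icc 1 K, x n0 i ≠ 0
  · obtain ⟨n0, hn0, hx0⟩ := h
    rw [Finset.mem_Icc] at hn0
    have huniq : ∀ n ∈ Finset.Icc 1 K, n ≠ n0 → x n i = 0 := by
      intro n hn hne
      rw [Finset.mem_Icc] at hn
      by_contra hxn
      exact hne (mblock_disjoint (hsupp n hn.1 hn.2 i hxn) (hsupp n0 hn0.1 hn0.2 i hx0))
    rw [DeltaOp, Finset.sum_eq_single_of_mem n0 (Finset.mem_Icc.mpr hn0)
        (fun n hn hne => by rw [huniq n hn hne, mul_zero]),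
      Finset.sum_eq_single_of_mem n0 (Finset.mem_Icc.mpr hn0)
        (fun n hn hne => by rw [huniq n hn hne, abs_zero, mul_zero]),
      abs_mul]
  · push_neg at h
    rw [DeltaOp, Finset.sum_eq_zero (fun n hn => by rw [h n hn, mul_zero]),
      Finset.sum_eq_zero (fun n hn => by rw [h n hn, abs_zero, mul_zero]), abs_zero]

include hsupp in
lemma mu_delta (y : ℕ → ℝ) (N : Finset ℕ) :
    mu (DeltaOp K x y) N = ∑ n ∈ Finset.Icc 1 K, |y (2 ^ n - 1)| * mu (x n) N := by
  rw [mu]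
  simp_rw [deltaAbs hsupp]
  rw [Finset.sum_comm]
  exact Finset.sum_congr rfl fun n _ => by rw [mu, Finset.mul_sum]

include hsupp in
lemma mu_xn_eq_inter {n : ℕ} (hn : n ∈ Finset.Icc 1 K) (N : Finset ℕ) :
    mu (x n) N = mu (x n) (N ∩ Mblock n) := by
  rw [Finset.mem_Icc] at hn
  apply (Finset.sum_subset Finset.inter_subset_left ?_).symm
  intro i hi hni
  have : i ∉ Mblock n := fun hm => hni (Finset.mem_inter.mpr ⟨hi, hm⟩)
  rw [abs_eq_zero]
  by_contra hx
  exact this (hsupp n hn.1 hn.2 i hx)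
end Delta

lemma main_core {p : ℝ} (hp : 1 < p) {K : ℕ} (hK : 1 ≤ K) (x : ℕ → ℕ → ℝ)
    (hsupp : ∀ n, 1 ≤ n → n ≤ K → ∀ j, x n j ≠ 0 → j ∈ Mblock n)
    (C : ℝ) (hC0 : 0 ≤ C) (hC : ∀ n ∈ Finset.Icc 1 K, BpNorm p (x n) ≤ C)
    (y : ℕ → ℝ) (hy : (Function.support y).Finite) :
    BpNorm p (DeltaOp K x y) ≤ (3 : ℝ) ^ (1 / p) * C * BpNorm p y := by
  classical
  have hp0 : p ≠ 0 := by positivity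
  have hppos : (0:ℝ) < p := by positivity
  set D := BpNorm p y with hD
  have hD0 : 0 ≤ D := bpnorm_nonneg p y
  have hxfin : ∀ n ∈ Finset.Icc 1 K, (Function.support (x n)).Finite := by
    intro n hn
    rw [Finset.mem_Icc] at hn
    exact Set.Finite.subset (Mblock n).finite_toSet (fun i hi => hsupp n hn.1 hn.2 i hi)
  apply Real.sSup_le ?_ (by positivity)
  rintro t ⟨m, N, hm, hadm, hsep, rfl⟩
  -- the set of active block indices of N j
  set T : Fin m → Finset ℕ :=
    fun j => (Finset.Icc 1 K).filter (fun n => (N j ∩ Mblock n).Nonempty) with hT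
  have hTIcc : ∀ j, T j ⊆ Finset.Icc 1 K := fun j => Finset.filter_subset _ _
  have hTwit : ∀ j, ∀ n ∈ T j, ∃ a ∈ N j, a ∈ Mblock n := by
    intro j n hn
    obtain ⟨a, ha⟩ := (Finset.mem_filter.mp hn).2
    exact ⟨a, (Finset.mem_inter.mp ha).1, (Finset.mem_inter.mp ha).2⟩
  -- monotonicity of blocks along the chain
  have hmono : ∀ {j j' : Fin m}, j < j' → ∀ n ∈ T j, ∀ n' ∈ T j', n ≤ n' := by
    intro j j' hjj' n hn n' hn'
    obtain ⟨a, haN, haM⟩ := hTwit j n hn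
    obtain ⟨b, hbN, hbM⟩ := hTwit j' n' hn'
    have hab : a < b := hsep j j' hjj' a haN b hbN
    by_contra hlt
    push_neg at hlt
    rw [Mblock, Finset.mem_Ico] at haM hbM
    have : 2 ^ n' ≤ 2 ^ (n - 1) := Nat.pow_le_pow_right (by norm_num) (by omega)
    omega
  -- mu of Delta restricted to active blocks
  have hmuT : ∀ j, mu (DeltaOp K x y) (N j)
      = ∑ n ∈ T j, |y (2 ^ n - 1)| * mu (x n) (N j) := by
    intro j
    rw [mu_delta hsupp, hT]
    refine (Finset.sum_filter_of_ne (p := fun n => (N j ∩ Mblock n).Nonempty)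
      (fun n hn hne => ?_)).symm
    by_contra hc
    rw [Finset.not_nonempty_iff_eq_empty] at hc
    rw [mu_xn_eq_inter hsupp hn, hc] at hne
    simp [mu] at hne
  have hmuxC : ∀ n ∈ Finset.Icc 1 K, ∀ Ns : Finset ℕ, mu (x n) Ns ≤ C := by
    intro n hn Ns
    have h1 : mu (x n) Ns ≤ mu (x n) (Mblock n) := by
      rw [mu_xn_eq_inter hsupp hn Ns]
      exact mu_mono _ Finset.inter_subset_right
    have hn' := Finset.mem_Icc.mp hn
    exact h1.trans ((mu_le_bpnorm hp (x n) (hxfin n hn)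
      (mblock_admissible hn'.1)).trans (hC n hn))
  -- the upper-end-point sets
  set E : Fin m → Finset ℕ := fun j => (T j).image (fun k => 2 ^ k - 1) with hE
  have hmuE : ∀ j, mu y (E j) = ∑ n ∈ T j, |y (2 ^ n - 1)| := by
    intro j
    rw [hE, mu, Finset.sum_image (fun a _ b _ h => pow2m1_injOn h)]
  have hEadm : ∀ j, (T j).Nonempty → Admissible (E j) := by
    intro j hTj
    have hcardTN : (T j).card ≤ (N j).card := by
      apply Finset.card_le_card_of_injOn
        (fun k => if h : (N j ∩ Mblock k).Nonempty then (N j ∩ Mblock k).max' h else 0)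
      · intro k hk
        have h := (Finset.mem_filter.mp hk).2
        simp only [h, dif_pos]
        exact (Finset.mem_inter.mp ((N j ∩ Mblock k).max'_mem h)).1
      · intro a ha b hb hab
        have hA := (Finset.mem_filter.mp ha).2
        have hB := (Finset.mem_filter.mp hb).2
        simp only [hA, hB, dif_pos] at hab
        exact mblock_disjoint (Finset.mem_inter.mp ((N j ∩ Mblock a).max'_mem hA)).2
          (hab ▸ (Finset.mem_inter.mp ((N j ∩ Mblock b).max'_mem hB)).2)
    constructor
    · exact hTj.image _
    · intro e he
      obtain ⟨k, hk, rfl⟩ := Finset.mem_image.mp he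
      obtain ⟨a, haN, haM⟩ := hTwit j k hk
      have h1 : (E j).card ≤ (T j).card := Finset.card_image_le
      have h2 : (N j).card ≤ a := (hadm j).2 a haN
      rw [Mblock, Finset.mem_Ico] at haM
      omega
  have hperj : ∀ j, mu (DeltaOp K x y) (N j) ≤ C * mu y (E j) := by
    intro j
    rw [hmuT j, hmuE j, Finset.mul_sum]
    apply Finset.sum_le_sum
    intro n hn
    rw [mul_comm C _]
    exact mul_le_mul_of_nonneg_left (hmuxC n (hTIcc j hn) (N j)) (abs_nonneg _)
  have hmuDnn : ∀ j, 0 ≤ mu (DeltaOp K x y) (N j) := fun j => mu_nonneg _ _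
  -- split the index set
  set P : Finset (Fin m) := Finset.univ.filter (fun j => (T j).Nonempty) with hP
  have hsum0 : ∑ j, (mu (DeltaOp K x y) (N j)) ^ p
      = ∑ j ∈ P, (mu (DeltaOp K x y) (N j)) ^ p := by
    rw [hP]
    refine (Finset.sum_filter_of_ne fun j _ hne => ?_).symm
    by_contra hc
    rw [Finset.not_nonempty_iff_eq_empty] at hc
    rw [hmuT j, hc] at hne
    simp [Real.zero_rpow hp0] at hne
  set f : Fin m → ℝ := fun j => (mu (DeltaOp K x y) (N j)) ^ p with hf
  have hfnn : ∀ j, 0 ≤ f j := fun j => Real.rpow_nonneg (hmuDnn j) p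
  set S1 : Finset (Fin m) := P.filter (fun j => (T j).card = 1) with hS1
  set S2 : Finset (Fin m) := P.filter (fun j => ¬ (T j).card = 1) with hS2
  have hsplit1 : ∑ j ∈ P, f j = ∑ j ∈ S1, f j + ∑ j ∈ S2, f j :=
    (Finset.sum_filter_add_sum_filter_not P _ f).symm
  have hS2two : ∀ j ∈ S2, 1 < (T j).card := by
    intro j hj
    have h1 := (Finset.mem_filter.mp hj).2
    have h2 := (Finset.mem_filter.mp (Finset.mem_filter.mp hj).1).2
    have := Finset.card_pos.mpr h2
    omega
  -- separation of E-sets for S2 indices with an intermediate S2 index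
  have key : ∀ i ∈ S2, ∀ j ∈ S2, (∃ l ∈ S2, i < l ∧ l < j) →
      ∀ a ∈ E i, ∀ b ∈ E j, a < b := by
    rintro i _ j _ ⟨l, hl, hil, hlj⟩ a ha b hb
    obtain ⟨k, hk, rfl⟩ := Finset.mem_image.mp ha
    obtain ⟨k', hk', rfl⟩ := Finset.mem_image.mp hb
    obtain ⟨u, hu, v, hv, huv⟩ := Finset.one_lt_card.mp (hS2two l hl)
    have h1 := hmono hil k hk u hu
    have h2 := hmono hil k hk v hv
    have h3 := hmono hlj u hu k' hk'
    have h4 := hmono hlj v hv k' hk'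
    exact pow2m1_lt (by omega)
  -- parity rank
  set rk : Fin m → ℕ := fun j => (S2.filter (· < j)).card with hrk
  have hbetween : ∀ i ∈ S2, ∀ j ∈ S2, i < j → rk i % 2 = rk j % 2 →
      ∃ l ∈ S2, i < l ∧ l < j := by
    intro i hi j hj hij hpar
    by_contra hc
    push_neg at hc
    have heq : S2.filter (· < j) = insert i (S2.filter (· < i)) := by
      ext l
      simp only [Finset.mem_filter, Finset.mem_insert]
      constructor
      · rintro ⟨hlS, hlj⟩
        rcases lt_trichotomy l i with h | h | h
        · exact Or.inr ⟨hlS, h⟩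
        · exact Or.inl h
        · exact absurd hlj (not_lt.mpr (hc l hlS h))
      · rintro (rfl | ⟨hlS, hli⟩)
        · exact ⟨hi, hij⟩
        · exact ⟨hlS, hli.trans hij⟩
    have hnotin : i ∉ S2.filter (· < i) := by
      simp only [Finset.mem_filter]
      exact fun h => lt_irrefl i h.2
    have : rk j = rk i + 1 := by
      rw [hrk]
      simp only
      rw [heq, Finset.card_insert_of_notMem hnotin]
    omega
  -- bound for a same-parity subfamily of S2
  have hS2bound : ∀ A : Finset (Fin m), A ⊆ S2 →
      (∀ i ∈ A, ∀ j ∈ A, rk i % 2 = rk j % 2) → ∑ j ∈ A, f j ≤ C ^ p * D ^ p := by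
    intro A hAS2 hApar
    have hstep : ∑ j ∈ A, f j ≤ ∑ j ∈ A, C ^ p * (mu y (E j)) ^ p := by
      apply Finset.sum_le_sum
      intro j hj
      rw [hf, ← Real.mul_rpow hC0 (mu_nonneg _ _)]
      exact Real.rpow_le_rpow (hmuDnn j) (hperj j) (le_of_lt hppos)
    refine hstep.trans ?_
    rw [← Finset.mul_sum]
    apply mul_le_mul_of_nonneg_left ?_ (Real.rpow_nonneg hC0 p)
    apply sum_mu_rpow_le hp y hy A E
    · intro j hj
      exact hEadm j (Finset.mem_filter.mp (Finset.mem_filter.mp (hAS2 hj)).1).2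
    · intro i hi j hj hij a ha b hb
      have hi2 := hAS2 hi
      have hj2 := hAS2 hj
      exact key i hi2 j hj2 (hbetween i hi2 j hj2 hij (hApar i hi j hj)) a ha b hb
  -- split S2 by parity
  have hsplit2 : ∑ j ∈ S2, f j ≤ 2 * (C ^ p * D ^ p) := by
    rw [← Finset.sum_filter_add_sum_filter_not S2 (fun j => rk j % 2 = 0) f, two_mul]
    apply add_le_add
    · apply hS2bound _ (Finset.filter_subset _ _)
      intro i hi j hj
      rw [(Finset.mem_filter.mp hi).2, (Finset.mem_filter.mp hj).2]
    · apply hS2bound _ (Finset.filter_subset _ _)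
      intro i hi j hj
      have h1 := (Finset.mem_filter.mp hi).2
      have h2 := (Finset.mem_filter.mp hj).2
      omega
  -- S1 bound
  have hS1bound : ∑ j ∈ S1, f j ≤ C ^ p * D ^ p := by
    set κ : Fin m → ℕ := fun j => (T j).sup id with hκ
    have hκval : ∀ j ∈ S1, T j = {κ j} := by
      intro j hj
      obtain ⟨a, ha⟩ := Finset.card_eq_one.mp (Finset.mem_filter.mp hj).2
      rw [ha, hκ]
      simp [Finset.sup_singleton]
      rw [ha, Finset.sup_singleton]
      rfl
    have hκIcc : ∀ j ∈ S1, κ j ∈ Finset.Icc 1 K := by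
      intro j hj
      apply hTIcc j
      rw [hκval j hj]
      exact Finset.mem_singleton_self _
    rw [← Finset.sum_fiberwise_of_maps_to hκIcc f]
    have hinner : ∀ k ∈ Finset.Icc 1 K,
        ∑ j ∈ S1.filter (fun j => κ j = k), f j ≤ |y (2 ^ k - 1)| ^ p * C ^ p := by
      intro k hk
      have heval : ∀ j ∈ S1.filter (fun j => κ j = k),
          f j = |y (2 ^ k - 1)| ^ p * (mu (x k) (N j)) ^ p := by
        intro j hj
        have hj1 := (Finset.mem_filter.mp hj).1
        have hjk := (Finset.mem_filter.mp hj).2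
        rw [hf]
        simp only
        rw [hmuT j, hκval j hj1, Finset.sum_singleton, hjk,
          Real.mul_rpow (abs_nonneg _) (mu_nonneg _ _)]
      rw [Finset.sum_congr rfl heval, ← Finset.mul_sum]
      apply mul_le_mul_of_nonneg_left ?_ (Real.rpow_nonneg (abs_nonneg _) p)
      have hxk := hxfin k hk
      have h1 : ∑ j ∈ S1.filter (fun j => κ j = k), (mu (x k) (N j)) ^ p
          ≤ (BpNorm p (x k)) ^ p := by
        apply sum_mu_rpow_le hp (x k) hxk _ N
        · intro j _
          exact hadm j
        · intro i _ j _ hij a ha b hb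
          exact hsep i j hij a ha b hb
      refine h1.trans ?_
      exact Real.rpow_le_rpow (bpnorm_nonneg _ _) (hC k hk) (le_of_lt hppos)
    calc ∑ k ∈ Finset.Icc 1 K, ∑ j ∈ S1.filter (fun j => κ j = k), f j
        ≤ ∑ k ∈ Finset.Icc 1 K, |y (2 ^ k - 1)| ^ p * C ^ p := Finset.sum_le_sum hinner
      _ = C ^ p * ∑ k ∈ Finset.Icc 1 K, |y (2 ^ k - 1)| ^ p := by
          rw [Finset.mul_sum]
          exact Finset.sum_congr rfl fun k _ => mul_comm _ _
      _ ≤ C ^ p * D ^ p := by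
          apply mul_le_mul_of_nonneg_left ?_ (Real.rpow_nonneg hC0 p)
          have h2 := sum_mu_rpow_le hp y hy (Finset.Icc 1 K)
            (fun k => {2 ^ k - 1}) ?_ ?_
          · have : ∀ k ∈ Finset.Icc 1 K, (mu y {2 ^ k - 1}) ^ p = |y (2 ^ k - 1)| ^ p := by
              intro k _
              rw [mu, Finset.sum_singleton]
            rwa [Finset.sum_congr rfl this] at h2
          · intro k hk
            rw [Finset.mem_Icc] at hk
            refine ⟨Finset.singleton_nonempty _, ?_⟩
            intro e he
            rw [Finset.mem_singleton] at he
            subst he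
            rw [Finset.card_singleton]
            have h2 : 2 ≤ 2 ^ k := by
              calc 2 = 2 ^ 1 := (pow_one 2).symm
                _ ≤ 2 ^ k := Nat.pow_le_pow_right (by norm_num) (by omega)
            omega
          · intro i _ j _ hij a ha b hb
            rw [Finset.mem_singleton] at ha hb
            subst ha; subst hb
            exact pow2m1_lt hij
  -- put it together
  have Htotal : ∑ j, f j ≤ 3 * (C ^ p * D ^ p) := by
    rw [hsum0, hsplit1]
    calc ∑ j ∈ S1, f j + ∑ j ∈ S2, f j ≤ C ^ p * D ^ p + 2 * (C ^ p * D ^ p) :=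
          add_le_add hS1bound hsplit2
      _ = 3 * (C ^ p * D ^ p) := by ring
  have hlhs : (0:ℝ) ≤ ∑ j, f j := Finset.sum_nonneg fun j _ => hfnn j
  calc (∑ j, f j) ^ (1 / p) ≤ (3 * (C ^ p * D ^ p)) ^ (1 / p) :=
        Real.rpow_le_rpow hlhs Htotal (by positivity)
    _ = (3:ℝ) ^ (1 / p) * C * D := by
        rw [Real.mul_rpow (by norm_num) (by positivity),
          Real.mul_rpow (Real.rpow_nonneg hC0 p) (Real.rpow_nonneg hD0 p),
          rpow_rpow_inv hC0 hp0, rpow_rpow_inv hD0 hp0, mul_assoc]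

lemma mu_basis {e : ℕ} (N : Finset ℕ) :
    mu (fun i => if i = e then (1:ℝ) else 0) N = if e ∈ N then (1:ℝ) else 0 := by
  rw [mu]
  rw [show (∑ n ∈ N, |if n = e then (1:ℝ) else 0|) = ∑ n ∈ N, if n = e then (1:ℝ) else 0
    from Finset.sum_congr rfl fun n _ => by split <;> simp]
  exact Finset.sum_ite_eq' N e (fun _ => (1:ℝ))

lemma bpnorm_basis {p : ℝ} (hp : 1 < p) {e : ℕ} (he : 1 ≤ e) :
    BpNorm p (fun i => if i = e then (1:ℝ) else 0) = 1 := by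
  classical
  have hp0 : p ≠ 0 := by positivity
  have hub : ∀ t ∈ { t : ℝ | ∃ (k : ℕ) (N : Fin k → Finset ℕ), 0 < k ∧
      (∀ j, Admissible (N j)) ∧ SepChain N ∧
      t = (∑ j, (mu (fun i => if i = e then (1:ℝ) else 0) (N j)) ^ p) ^ (1 / p) }, t ≤ 1 := by
    rintro t ⟨k, N, hk, hadm, hsep, rfl⟩
    have hterm : ∀ j : Fin k, (mu (fun i => if i = e then (1:ℝ) else 0) (N j)) ^ p
        = if e ∈ N j then (1:ℝ) else 0 := by
      intro j
      rw [mu_basis]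
      split
      · exact Real.one_rpow p
      · exact Real.zero_rpow hp0
    have hsum : ∑ j, (mu (fun i => if i = e then (1:ℝ) else 0) (N j)) ^ p ≤ 1 := by
      rw [Finset.sum_congr rfl fun j _ => hterm j, Finset.sum_boole]
      have hcard : (Finset.univ.filter (fun j : Fin k => e ∈ N j)).card ≤ 1 := by
        apply Finset.card_le_one.mpr
        intro a ha b hb
        by_contra hne
        exact sepChain_pairwiseDisjoint hsep hne (Finset.mem_filter.mp ha).2
          (Finset.mem_filter.mp hb).2
      exact_mod_cast hcard
    calc (∑ j, (mu (fun i => if i = e then (1:ℝ) else 0) (N j)) ^ p) ^ (1/p)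
        ≤ (1:ℝ) ^ (1/p) := Real.rpow_le_rpow
          (Finset.sum_nonneg fun j _ => Real.rpow_nonneg (mu_nonneg _ _) _) hsum (by positivity)
      _ = 1 := Real.one_rpow _
  have hmem : (1:ℝ) ∈ { t : ℝ | ∃ (k : ℕ) (N : Fin k → Finset ℕ), 0 < k ∧
      (∀ j, Admissible (N j)) ∧ SepChain N ∧
      t = (∑ j, (mu (fun i => if i = e then (1:ℝ) else 0) (N j)) ^ p) ^ (1 / p) } := by
    refine ⟨1, fun _ => {e}, Nat.one_pos, ?_, ?_, ?_⟩
    · intro j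
      exact ⟨Finset.singleton_nonempty _, fun a ha => by
        rw [Finset.mem_singleton] at ha; subst ha; rw [Finset.card_singleton]; exact he⟩
    · intro i j hij
      exact absurd (Subsingleton.elim i j) hij.ne
    · rw [Fin.sum_univ_one, mu_basis]
      simp [Real.one_rpow]
  exact le_antisymm (Real.sSup_le hub zero_le_one) (le_csSup ⟨1, hub⟩ hmem)

lemma delta_basis {K : ℕ} (x : ℕ → ℕ → ℝ) {k : ℕ} (hk1 : 1 ≤ k) (hkK : k ≤ K) :
    DeltaOp K x (fun i => if i = 2 ^ k - 1 then (1:ℝ) else 0) = x k := by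
  funext j
  rw [DeltaOp]
  have : ∀ n ∈ Finset.Icc 1 K,
      (if 2 ^ n - 1 = 2 ^ k - 1 then (1:ℝ) else 0) * x n j
      = if n = k then x n j else 0 := by
    intro n _
    by_cases h : n = k
    · subst h; simp
    · have : ¬ (2 ^ n - 1 = 2 ^ k - 1) := fun hc => h (pow2m1_injOn hc)
      simp [h, this]
  rw [Finset.sum_congr rfl this, Finset.sum_ite_eq' (Finset.Icc 1 K) k (fun n => x n j)]
  simp [Finset.mem_Icc, hk1, hkK]

/-- Let `p ∈ (1,∞)` and let `x_1, …, x_K` be finitely supported real sequences with the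
support of `x_n` contained in `M_n = [2^{n-1}, 2^n) ∩ ℕ` for each `n`.  Define
`Δ(y) = ∑_{n=1}^K y_{2^n−1} · x_n`.  Then:
(i) for every finitely supported real sequence `y`,
    `‖Δ(y)‖_{B_p} ≤ 3^{1/p} · max_{1≤n≤K} ‖x_n‖_{B_p} · ‖y‖_{B_p}`;
(ii) for each `k ∈ {1,…,K}`, the basis vector `b_{2^k−1}` satisfies
    `‖b_{2^k−1}‖_{B_p} = 1` and `Δ(b_{2^k−1}) = x_k`, so that
    `sup {‖Δ(y)‖_{B_p} : ‖y‖_{B_p} ≤ 1} ≥ max_{1≤n≤K} ‖x_n‖_{B_p}`. -/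
theorem stmt_13 (p : ℝ) (hp : 1 < p) (K : ℕ) (hK : 1 ≤ K) (x : ℕ → ℕ → ℝ)
    (hsupp : ∀ n, 1 ≤ n → n ≤ K → ∀ j, x n j ≠ 0 → j ∈ Mblock n) :
    (∀ y : ℕ → ℝ, (Function.support y).Finite →
      BpNorm p (DeltaOp K x y) ≤
        (3 : ℝ) ^ (1 / p) *
          ((Finset.Icc 1 K).sup' (Finset.nonempty_Icc.mpr hK) fun n => BpNorm p (x n)) *
          BpNorm p y) ∧
    (∀ k, 1 ≤ k → k ≤ K →
      BpNorm p (fun i => if i = 2 ^ k - 1 then (1 : ℝ) else 0) = 1 ∧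
      DeltaOp K x (fun i => if i = 2 ^ k - 1 then (1 : ℝ) else 0) = x k) ∧
    ((Finset.Icc 1 K).sup' (Finset.nonempty_Icc.mpr hK) fun n => BpNorm p (x n)) ≤
      sSup { t : ℝ | ∃ y : ℕ → ℝ, (Function.support y).Finite ∧ BpNorm p y ≤ 1 ∧
        t = BpNorm p (DeltaOp K x y) } := by
  classical
  have hCge : ∀ n ∈ Finset.Icc 1 K, BpNorm p (x n)
      ≤ (Finset.Icc 1 K).sup' (Finset.nonempty_Icc.mpr hK) fun n => BpNorm p (x n) :=
    fun n hn => Finset.le_sup' (fun n => BpNorm p (x n)) hn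
  have hC0 : 0 ≤ (Finset.Icc 1 K).sup' (Finset.nonempty_Icc.mpr hK) fun n => BpNorm p (x n) :=
    le_trans (bpnorm_nonneg p (x 1)) (hCge 1 (by simp [Finset.mem_Icc, hK]))
  have h2pow : ∀ k : ℕ, 1 ≤ k → 1 ≤ 2 ^ k - 1 := by
    intro k hk
    have h2 : 2 ≤ 2 ^ k := by
      calc 2 = 2 ^ 1 := (pow_one 2).symm
        _ ≤ 2 ^ k := Nat.pow_le_pow_right (by norm_num) hk
    omega
  have part1 : ∀ y : ℕ → ℝ, (Function.support y).Finite →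
      BpNorm p (DeltaOp K x y) ≤
        (3 : ℝ) ^ (1 / p) *
          ((Finset.Icc 1 K).sup' (Finset.nonempty_Icc.mpr hK) fun n => BpNorm p (x n)) *
          BpNorm p y :=
    fun y hy => main_core hp hK x hsupp _ hC0 hCge y hy
  have hbfin : ∀ e : ℕ, (Function.support (fun i => if i = e then (1:ℝ) else 0)).Finite := by
    intro e
    apply Set.Finite.subset (Set.finite_singleton e)
    intro i hi
    rw [Function.mem_support] at hi
    by_contra hne
    simp only [Set.mem_singleton_iff] at hne
    exact hi (if_neg hne)
  refine ⟨part1, fun k h1 h2 => ⟨bpnorm_basis hp (h2pow k h1), delta_basis x h1 h2⟩, ?_⟩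
  have hbdd : BddAbove { t : ℝ | ∃ y : ℕ → ℝ, (Function.support y).Finite ∧ BpNorm p y ≤ 1 ∧
      t = BpNorm p (DeltaOp K x y) } := by
    refine ⟨(3 : ℝ) ^ (1 / p) *
      ((Finset.Icc 1 K).sup' (Finset.nonempty_Icc.mpr hK) fun n => BpNorm p (x n)), ?_⟩
    rintro t ⟨y, hy, hy1, rfl⟩
    calc BpNorm p (DeltaOp K x y) ≤ _ * BpNorm p y := part1 y hy
      _ ≤ _ * 1 := mul_le_mul_of_nonneg_left hy1
          (mul_nonneg (Real.rpow_nonneg (by norm_num) _) hC0)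
      _ = _ := mul_one _
  apply Finset.sup'_le
  intro n hn
  rw [Finset.mem_Icc] at hn
  apply le_csSup hbdd
  refine ⟨fun i => if i = 2 ^ n - 1 then (1:ℝ) else 0, hbfin _,
    le_of_eq (bpnorm_basis hp (h2pow n hn.1)), ?_⟩
  rw [delta_basis x hn.1 hn.2]
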